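/- Isometric embedding of the hyperbolic cusp: for x ∈ ℝ and y > 1/(2π), define F(x,y) ∈ ℝ³ by F(x,y) = ( (1/(2πy))·sin 2πx, (1/(2πy))·cos 2πx, log(2πy + √(4π²y² − 1)) − √(1 − (2πy)^{−2}) ). Then the partial derivatives satisfy ‖∂F/∂x‖² = 1/y², ‖∂F/∂y‖² = 1/y², and ⟨∂F/∂x, ∂F/∂y⟩ = 0; that is, the pullback of the Euclidean metric of ℝ³ under F is the hyperbolic metric (dx² + dy²)/y² of curvature −1. -/

import Mathlib

/-!
With `u = 2πy` we have `F(x, y) = G(2πx, u)`, where `G(θ, u) = (u⁻¹ sin θ, u⁻¹ cos θ, h(u))` is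
Beltrami's pseudosphere: the surface of revolution of radius `1/u` over the tractrix height
`h(u) = arcosh u - √(1 - u⁻²)`. Since `h'(u) = √(u² - 1)/u²`, we get
`‖∂_u G‖² = u⁻⁴ + h'(u)² = u⁻² = ‖∂_θ G‖²`, and the two partials are orthogonal because the
rotation is orthogonal to the meridian. So `G` pulls back `(dθ² + du²)/u²`, a metric invariant under
the dilation `(x, y) ↦ (2πx, 2πy)`.
-/

/-- The isometric embedding of the hyperbolic cusp into Euclidean 3-space. -/
noncomputable def cuspEmbed (x y : ℝ) : EuclideanSpace ℝ (Fin 3) :=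
  (WithLp.equiv 2 (Fin 3 → ℝ)).symm
    ![(1 / (2 * Real.pi * y)) * Real.sin (2 * Real.pi * x),
      (1 / (2 * Real.pi * y)) * Real.cos (2 * Real.pi * x),
      Real.log (2 * Real.pi * y + Real.sqrt (4 * Real.pi ^ 2 * y ^ 2 - 1)) -
        Real.sqrt (1 - ((2 * Real.pi * y)⁻¹) ^ 2)]

open Real

theorem HasDerivAt.toLp {𝕜 ι : Type*} [NontriviallyNormedField 𝕜] [Fintype ι]
    {E : ι → Type*} [∀ i, NormedAddCommGroup (E i)] [∀ i, NormedSpace 𝕜 (E i)]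
    (p : ENNReal) [Fact (1 ≤ p)] {f : 𝕜 → ∀ i, E i} {f' : ∀ i, E i} {t : 𝕜}
    (h : HasDerivAt f f' t) :
    HasDerivAt (fun s => WithLp.toLp p (f s)) (WithLp.toLp p f') t :=
  (PiLp.hasFDerivAt_toLp p (f t)).comp_hasDerivAt t h

theorem hasDerivAt_vec3 {f₀ f₁ f₂ : ℝ → ℝ} {a₀ a₁ a₂ t : ℝ} (h₀ : HasDerivAt f₀ a₀ t)
    (h₁ : HasDerivAt f₁ a₁ t) (h₂ : HasDerivAt f₂ a₂ t) :
    HasDerivAt (fun s => !₂[f₀ s, f₁ s, f₂ s]) !₂[a₀, a₁, a₂] t := by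
  refine HasDerivAt.toLp 2 (hasDerivAt_pi.2 fun i => ?_)
  fin_cases i <;> assumption

theorem norm_vec3_sq (a b c : ℝ) : ‖!₂[a, b, c]‖ ^ 2 = a ^ 2 + b ^ 2 + c ^ 2 := by
  simp [EuclideanSpace.real_norm_sq_eq, Fin.sum_univ_three]

theorem inner_vec3 (a b c a' b' c' : ℝ) :
    inner ℝ !₂[a, b, c] !₂[a', b', c'] = a * a' + b * b' + c * c' := by
  simp only [PiLp.inner_apply, RCLike.inner_apply, conj_trivial, Fin.sum_univ_three,
    Matrix.cons_val_zero, Matrix.cons_val_one, Matrix.cons_val]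
  ring

theorem sqrt_one_sub_inv_sq {u : ℝ} (hu : 0 < u) : √(1 - u⁻¹ ^ 2) = √(u ^ 2 - 1) / u := by
  rw [← sqrt_sq hu.le, ← sqrt_div' _ (sq_nonneg u), sqrt_sq hu.le]
  congr 1
  field_simp

theorem hasDerivAt_sqrt_one_sub_inv_sq {u : ℝ} (hu : 1 < u) :
    HasDerivAt (fun v => √(1 - v⁻¹ ^ 2)) (u ^ 2 * √(u ^ 2 - 1))⁻¹ u := by
  have hu0 : 0 < u := one_pos.trans hu
  have hrad : 1 - u⁻¹ ^ 2 ≠ 0 := by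
    rw [sub_ne_zero, inv_pow]; exact (inv_lt_one_of_one_lt₀ (one_lt_pow₀ hu two_ne_zero)).ne'
  refine ((((hasDerivAt_inv hu0.ne').fun_pow 2).const_sub 1).sqrt hrad).congr_deriv ?_
  rw [sqrt_one_sub_inv_sq hu0]
  push_cast
  field_simp

noncomputable def tractrixHeight (u : ℝ) : ℝ := arcosh u - √(1 - u⁻¹ ^ 2)

theorem hasDerivAt_tractrixHeight {u : ℝ} (hu : 1 < u) :
    HasDerivAt tractrixHeight (√(u ^ 2 - 1) / u ^ 2) u := by
  have hA : 0 < √(u ^ 2 - 1) := sqrt_pos.2 (by nlinarith)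
  have hAsq : √(u ^ 2 - 1) ^ 2 = u ^ 2 - 1 := sq_sqrt (by nlinarith)
  refine ((hasDerivAt_arcosh hu).sub (hasDerivAt_sqrt_one_sub_inv_sq hu)).congr_deriv ?_
  field_simp
  linear_combination -hAsq

noncomputable def pseudosphere (θ u : ℝ) : EuclideanSpace ℝ (Fin 3) :=
  !₂[u⁻¹ * sin θ, u⁻¹ * cos θ, tractrixHeight u]

theorem cuspEmbed_eq_pseudosphere (x y : ℝ) :
    cuspEmbed x y = pseudosphere (2 * π * x) (2 * π * y) := by
  simp only [cuspEmbed, pseudosphere, tractrixHeight, arcosh, one_div, mul_pow]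
  norm_num

theorem hasDerivAt_pseudosphere_fst (θ u : ℝ) :
    HasDerivAt (fun θ' => pseudosphere θ' u) !₂[u⁻¹ * cos θ, -(u⁻¹ * sin θ), 0] θ := by
  refine hasDerivAt_vec3 ((hasDerivAt_sin θ).const_mul _) ?_ (hasDerivAt_const _ _)
  simpa using (hasDerivAt_cos θ).const_mul u⁻¹

theorem hasDerivAt_pseudosphere_snd (θ : ℝ) {u : ℝ} (hu : 1 < u) :
    HasDerivAt (fun u' => pseudosphere θ u')
      !₂[-(u ^ 2)⁻¹ * sin θ, -(u ^ 2)⁻¹ * cos θ, √(u ^ 2 - 1) / u ^ 2] u :=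
  have hinv := hasDerivAt_inv (one_pos.trans hu).ne'
  hasDerivAt_vec3 (hinv.mul_const _) (hinv.mul_const _) (hasDerivAt_tractrixHeight hu)

def PullbackIsHyperbolicAt {E : Type*} [NormedAddCommGroup E] [InnerProductSpace ℝ E]
    (G : ℝ → ℝ → E) (x y : ℝ) : Prop :=
  ∃ Gx Gy : E, HasDerivAt (fun x' => G x' y) Gx x ∧ HasDerivAt (fun y' => G x y') Gy y ∧
    ‖Gx‖ ^ 2 = 1 / y ^ 2 ∧ ‖Gy‖ ^ 2 = 1 / y ^ 2 ∧ inner ℝ Gx Gy = 0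

theorem pullbackIsHyperbolicAt_pseudosphere (θ : ℝ) {u : ℝ} (hu : 1 < u) :
    PullbackIsHyperbolicAt pseudosphere θ u := by
  have hAsq : √(u ^ 2 - 1) ^ 2 = u ^ 2 - 1 := sq_sqrt (by nlinarith)
  refine ⟨_, _, hasDerivAt_pseudosphere_fst θ u, hasDerivAt_pseudosphere_snd θ hu,
    ?_, ?_, ?_⟩ <;> simp only [norm_vec3_sq, inner_vec3]
  · linear_combination u⁻¹ ^ 2 * sin_sq_add_cos_sq θ
  · rw [div_pow, hAsq]
    field_simp
    linear_combination sin_sq_add_cos_sq θ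
  · ring

theorem PullbackIsHyperbolicAt.comp_mul {E : Type*} [NormedAddCommGroup E]
    [InnerProductSpace ℝ E] {G : ℝ → ℝ → E} {a x y : ℝ}
    (h : PullbackIsHyperbolicAt G (a * x) (a * y)) (ha : a ≠ 0) :
    PullbackIsHyperbolicAt (fun x' y' => G (a * x') (a * y')) x y := by
  obtain ⟨Gx, Gy, hx, hy, hGx, hGy, hGxy⟩ := h
  refine ⟨a • Gx, a • Gy, hx.scomp x (hasDerivAt_const_mul a),
    hy.scomp y (hasDerivAt_const_mul a), ?_, ?_, ?_⟩
  · rw [norm_smul, mul_pow, hGx, Real.norm_eq_abs, sq_abs]; field_simp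
  · rw [norm_smul, mul_pow, hGy, Real.norm_eq_abs, sq_abs]; field_simp
  · rw [inner_smul_left, inner_smul_right, hGxy]; simp

/-- The pullback of the Euclidean metric under `cuspEmbed` is the hyperbolic metric
`(dx² + dy²)/y²`: `‖∂F/∂x‖² = ‖∂F/∂y‖² = 1/y²` and `⟨∂F/∂x, ∂F/∂y⟩ = 0`. -/
theorem cusp_embedding_isometric (x y : ℝ) (hy : 1 / (2 * Real.pi) < y) :
    ∃ Fx Fy : EuclideanSpace ℝ (Fin 3),
      HasDerivAt (fun x' : ℝ => cuspEmbed x' y) Fx x ∧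
      HasDerivAt (fun y' : ℝ => cuspEmbed x y') Fy y ∧
      ‖Fx‖ ^ 2 = 1 / y ^ 2 ∧ ‖Fy‖ ^ 2 = 1 / y ^ 2 ∧ inner (𝕜 := ℝ) Fx Fy = 0 := by
  have h2π : 0 < 2 * π := by positivity
  have hu : 1 < 2 * π * y := by rwa [div_lt_iff₀' h2π] at hy
  have h := (pullbackIsHyperbolicAt_pseudosphere (2 * π * x) hu).comp_mul h2π.ne'
  rw [funext₂ cuspEmbed_eq_pseudosphere]
  exact h
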